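/- Let T* and C be random variables that are conditionally independent given a random vector Z, let T = min(T*, C) and δ = 1{T* ≤ C}. Let G(t|z) = P(C ≤ t | Z = z) and fix τ with 1 - G(τ|Z) > 0 almost surely. For any bounded measurable function f : ℝ≥0 × ℝ^d → ℝ, defining the IPCW weight w = 1{T ≤ τ}·δ/(1 - G(T⁻|Z)) + 1{T > τ}/(1 - G(τ|Z)), one has E[f(min(T,τ), Z) · w] = E[f(min(T*,τ), Z)]. -/

import Mathlib

/-!
Conditionally on `Z = z`, conditional independence makes `(T*, C)` distributed as `α_z ⊗ β_z`,
and `G(·|z)` is the cdf of `β_z` for almost every `z` (at left limits too, by approximating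
through rationals). For a fixed value `t` of `T*` the weight vanishes off the event `{t ≤ C}`
(if `t ≤ τ`), resp. `{τ < C}` (if `τ < t`); on that event `min(T, τ) = min(T*, τ)`, and the weight
is the reciprocal of its `β_z`-probability `1 - G(t⁻|z)`, resp. `1 - G(τ|z)`. Integrating out `C`
therefore returns `f(min(T*, τ), z)`.
-/

open MeasureTheory ProbabilityTheory Filter Set Topology

/-- `β` stands for the conditional law of `C`: `β.real (Iio s)` is `G(s⁻|z)` and
`β.real (Iic τ)` is `G(τ|z)`. -/
noncomputable def ipcwWeight (β : Measure ℝ) (τ t c : ℝ) : ℝ :=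
  (if min t c ≤ τ then (if t ≤ c then 1 else 0) / (1 - β.real (Iio (min t c))) else 0) +
    (if τ < min t c then 1 / (1 - β.real (Iic τ)) else 0)

lemma ipcwWeight_eq_ite (β : Measure ℝ) (τ t c : ℝ) :
    ipcwWeight β τ t c =
      if t ≤ c ∧ t ≤ τ then (1 - β.real (Iio t))⁻¹
      else if τ < t ∧ τ < c then (1 - β.real (Iic τ))⁻¹ else 0 := by
  unfold ipcwWeight
  rcases le_or_gt t c with htc | hct
  · rw [min_eq_left htc]
    rcases le_or_gt t τ with htτ | hτt
    · simp [htc, htτ, not_lt.2 htτ]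
    · simp [not_le.2 hτt, hτt, hτt.trans_le htc]
  · rw [min_eq_right hct.le]
    rcases le_or_gt c τ with hcτ | hτc
    · simp [hcτ, not_le.2 hct, not_lt.2 hcτ]
    · simp [not_le.2 hct, not_le.2 hτc, hτc, hτc.trans hct]

lemma mul_ipcwWeight (β : Measure ℝ) (g : ℝ → ℝ) (τ t c : ℝ) :
    g (min (min t c) τ) * ipcwWeight β τ t c = g (min t τ) * ipcwWeight β τ t c := by
  rw [ipcwWeight_eq_ite]
  split_ifs with h₁ h₂
  · rw [min_eq_left h₁.1]
  · rw [min_eq_right (le_min h₂.1.le h₂.2.le), min_eq_right h₂.1.le]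
  · simp

section ProbabilityMeasure

variable (β : Measure ℝ) [IsProbabilityMeasure β] {τ : ℝ}

lemma ipcwWeight_nonneg (t c : ℝ) : 0 ≤ ipcwWeight β τ t c := by
  have (s : Set ℝ) : 0 ≤ (1 - β.real s)⁻¹ := inv_nonneg.2 (sub_nonneg.2 measureReal_le_one)
  rw [ipcwWeight_eq_ite]
  split_ifs <;> simp [this]

lemma ipcwWeight_le (hβτ : β.real (Iic τ) < 1) (t c : ℝ) :
    ipcwWeight β τ t c ≤ (1 - β.real (Iic τ))⁻¹ := by
  have hpos : 0 < 1 - β.real (Iic τ) := sub_pos.2 hβτ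
  rw [ipcwWeight_eq_ite]
  split_ifs with h
  · exact inv_anti₀ hpos (sub_le_sub_left (measureReal_mono (Iio_subset_Iic h.2)) 1)
  · exact le_rfl
  · exact inv_nonneg.2 hpos.le

lemma integral_ipcwWeight_right (hβτ : β.real (Iic τ) < 1) (t : ℝ) :
    ∫ c, ipcwWeight β τ t c ∂β = 1 := by
  rcases le_or_gt t τ with htτ | hτt
  · have hw : ipcwWeight β τ t = (Ici t).indicator fun _ => (1 - β.real (Iio t))⁻¹ := by
      ext c
      simp [ipcwWeight_eq_ite, indicator, htτ, not_lt.2 htτ]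
    have hpos : 0 < 1 - β.real (Iio t) :=
      (sub_pos.2 hβτ).trans_le (sub_le_sub_left (measureReal_mono (Iio_subset_Iic htτ)) 1)
    rw [hw, integral_indicator_const _ measurableSet_Ici, ← compl_Iio,
      probReal_compl_eq_one_sub measurableSet_Iio, smul_eq_mul, mul_inv_cancel₀ hpos.ne']
  · have hw : ipcwWeight β τ t = (Ioi τ).indicator fun _ => (1 - β.real (Iic τ))⁻¹ := by
      ext c
      simp [ipcwWeight_eq_ite, indicator, hτt, not_le.2 hτt]
    rw [hw, integral_indicator_const _ measurableSet_Ioi, ← compl_Iic,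
      probReal_compl_eq_one_sub measurableSet_Iic, smul_eq_mul,
      mul_inv_cancel₀ (sub_pos.2 hβτ).ne']

lemma integral_mul_ipcwWeight_right (hβτ : β.real (Iic τ) < 1) (g : ℝ → ℝ) (t : ℝ) :
    ∫ c, g (min (min t c) τ) * ipcwWeight β τ t c ∂β = g (min t τ) := by
  simp_rw [mul_ipcwWeight, integral_const_mul, integral_ipcwWeight_right β hβτ, mul_one]

lemma integral_prod_mul_ipcwWeight (α : Measure ℝ) [SFinite α] (hβτ : β.real (Iic τ) < 1)
    {g : ℝ → ℝ}
    (hg : Integrable (fun p : ℝ × ℝ => g (min (min p.1 p.2) τ) * ipcwWeight β τ p.1 p.2)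
      (α.prod β)) :
    ∫ p, g (min (min p.1 p.2) τ) * ipcwWeight β τ p.1 p.2 ∂(α.prod β) = ∫ t, g (min t τ) ∂α := by
  simp_rw [integral_prod _ hg, integral_mul_ipcwWeight_right β hβτ]

end ProbabilityMeasure

section Kernel

variable {γ : Type*} [MeasurableSpace γ]

lemma ProbabilityTheory.Kernel.measurable_measureReal_Iio (η : Kernel γ ℝ) [IsFiniteKernel η] :
    Measurable fun x : γ × ℝ => (η x.1).real (Iio x.2) := by
  have hlt : MeasurableSet {y : (γ × ℝ) × ℝ | y.2 < y.1.2} :=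
    measurableSet_lt measurable_snd measurable_fst.snd
  exact (Kernel.measurable_kernel_prodMk_left (κ := η.comap Prod.fst measurable_fst)
    hlt).ennreal_toReal

lemma ProbabilityTheory.Kernel.measurable_ipcwWeight (η : Kernel γ ℝ) [IsFiniteKernel η] (τ : ℝ) :
    Measurable fun x : γ × ℝ × ℝ => ipcwWeight (η x.1) τ x.2.1 x.2.2 := by
  have hIio : Measurable fun x : γ × ℝ × ℝ => (η x.1).real (Iio x.2.1) :=
    η.measurable_measureReal_Iio.comp (measurable_fst.prodMk measurable_snd.fst)
  have hIic : Measurable fun x : γ × ℝ × ℝ => (η x.1).real (Iic τ) :=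
    (η.measurable_coe measurableSet_Iic).ennreal_toReal.comp measurable_fst
  simp_rw [ipcwWeight_eq_ite]
  refine Measurable.ite ?_ ?_ (Measurable.ite ?_ ?_ measurable_const)
  · exact (measurableSet_le measurable_snd.fst measurable_snd.snd).inter
      (measurableSet_le measurable_snd.fst measurable_const)
  · exact (hIio.const_sub 1).inv
  · exact (measurableSet_lt measurable_const measurable_snd.fst).inter
      (measurableSet_lt measurable_const measurable_snd.snd)
  · exact (hIic.const_sub 1).inv

end Kernel

section CompProd

variable {γ : Type*} [MeasurableSpace γ] {ν : Measure γ} [IsFiniteMeasure ν]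
  {κ η : Kernel γ ℝ} [IsMarkovKernel κ] [IsMarkovKernel η] {τ M : ℝ} {f : ℝ × γ → ℝ}

lemma integrable_compProd_mul_ipcwWeight (hη : ∀ᵐ z ∂ν, (η z).real (Iic τ) < 1)
    (hf : Measurable f) (hfM : ∀ p, |f p| ≤ M) :
    Integrable (fun x : γ × ℝ × ℝ =>
      f (min (min x.2.1 x.2.2) τ, x.1) * ipcwWeight (η x.1) τ x.2.1 x.2.2) (ν ⊗ₘ (κ ×ₖ η)) := by
  have hF : Measurable fun x : γ × ℝ × ℝ =>
      f (min (min x.2.1 x.2.2) τ, x.1) * ipcwWeight (η x.1) τ x.2.1 x.2.2 :=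
    (hf.comp (by fun_prop)).mul (η.measurable_ipcwWeight τ)
  have hsection (z : γ) (hz : (η z).real (Iic τ) < 1) :
      Integrable (fun p : ℝ × ℝ => f (min (min p.1 p.2) τ, z) * ipcwWeight (η z) τ p.1 p.2)
        ((κ ×ₖ η) z) := by
    refine .of_bound (hF.comp measurable_prodMk_left).aestronglyMeasurable
      (M * (1 - (η z).real (Iic τ))⁻¹) (ae_of_all _ fun p => ?_)
    rw [norm_mul, Real.norm_eq_abs, Real.norm_of_nonneg (ipcwWeight_nonneg _ _ _)]
    exact mul_le_mul (hfM _) (ipcwWeight_le _ hz _ _) (ipcwWeight_nonneg _ _ _)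
      ((abs_nonneg _).trans (hfM (0, z)))
  rw [Measure.integrable_compProd_iff hF.aestronglyMeasurable]
  refine ⟨hη.mono hsection, .of_bound
    hF.norm.stronglyMeasurable.integral_kernel_prod_right'.aestronglyMeasurable M
    (hη.mono fun z hz => ?_)⟩
  have habs : ∫ p, ‖f (min (min p.1 p.2) τ, z) * ipcwWeight (η z) τ p.1 p.2‖ ∂((κ ×ₖ η) z)
      = ∫ t, |f (min t τ, z)| ∂(κ z) := by
    have := (hsection z hz).norm
    simp_rw [norm_mul, Real.norm_eq_abs, abs_of_nonneg (ipcwWeight_nonneg _ _ _)] at this ⊢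
    rw [Kernel.prod_apply] at this ⊢
    exact integral_prod_mul_ipcwWeight (η z) (κ z) hz (g := fun t => |f (t, z)|) this
  rw [Real.norm_of_nonneg (integral_nonneg fun _ => norm_nonneg _), habs]
  calc ∫ t, |f (min t τ, z)| ∂(κ z) ≤ ∫ _t, M ∂(κ z) :=
        integral_mono_of_nonneg (ae_of_all _ fun _ => abs_nonneg _) (integrable_const M)
          (ae_of_all _ fun _ => hfM _)
    _ = M := by simp

lemma integral_compProd_mul_ipcwWeight (hη : ∀ᵐ z ∂ν, (η z).real (Iic τ) < 1)
    (hf : Measurable f) (hfM : ∀ p, |f p| ≤ M) :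
    ∫ x, f (min (min x.2.1 x.2.2) τ, x.1) * ipcwWeight (η x.1) τ x.2.1 x.2.2 ∂(ν ⊗ₘ (κ ×ₖ η))
      = ∫ x, f (min x.2 τ, x.1) ∂(ν ⊗ₘ κ) := by
  have hint := integrable_compProd_mul_ipcwWeight (κ := κ) hη hf hfM
  have hbdd : Integrable (fun x : γ × ℝ => f (min x.2 τ, x.1)) (ν ⊗ₘ κ) :=
    .of_bound (hf.comp (by fun_prop)).aestronglyMeasurable M (ae_of_all _ fun _ => hfM _)
  rw [Measure.integral_compProd hint, Measure.integral_compProd hbdd]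
  refine integral_congr_ae ?_
  filter_upwards [hη, ((Measure.integrable_compProd_iff hint.aestronglyMeasurable).1 hint).1]
    with z hz hsection
  rw [Kernel.prod_apply] at hsection ⊢
  exact integral_prod_mul_ipcwWeight (η z) (κ z) hz (g := fun t => f (t, z)) hsection

end CompProd

lemma tendsto_measureReal_Iic_nhdsLT (β : Measure ℝ) [IsProbabilityMeasure β] (t : ℝ) :
    Tendsto (fun s => β.real (Iic s)) (𝓝[<] t) (𝓝 (β.real (Iio t))) := by
  have hIio := (cdf β).measure_Iio (tendsto_cdf_atBot β) t
  rw [measure_cdf, sub_zero] at hIio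
  have hnonneg : 0 ≤ Function.leftLim (cdf β) t :=
    (cdf_nonneg β (t - 1)).trans ((monotone_cdf β).le_leftLim (sub_one_lt t))
  rw [measureReal_def, hIio, ENNReal.toReal_ofReal hnonneg, ← funext (cdf_eq_real β)]
  exact (monotone_cdf β).tendsto_leftLim t

lemma eq_of_tendsto_nhdsLT_of_eq_on_rat {f g : ℝ → ℝ} {t a b : ℝ}
    (hf : Tendsto f (𝓝[<] t) (𝓝 a)) (hg : Tendsto g (𝓝[<] t) (𝓝 b)) (hfg : ∀ q : ℚ, f q = g q) :
    a = b := by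
  refine tendsto_nhds_unique_of_frequently_eq hf hg (frequently_iff.2 fun hU => ?_)
  obtain ⟨l, hl, hlU⟩ := mem_nhdsLT_iff_exists_Ioo_subset.1 hU
  obtain ⟨q, hlq, hqt⟩ := exists_rat_btwn (mem_Iio.1 hl)
  exact ⟨q, hlU ⟨hlq, hqt⟩, hfg q⟩

theorem ipcw_unbiased_general
    {Ω : Type*} [mΩ : MeasurableSpace Ω] [StandardBorelSpace Ω]
    (μ : Measure Ω) [IsProbabilityMeasure μ]
    {d : ℕ} (Tstar C : Ω → ℝ) (Z : Ω → (Fin d → ℝ))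
    (hT : Measurable Tstar) (hC : Measurable C) (hZ : Measurable Z)
    (hmZ : MeasurableSpace.comap Z inferInstance ≤ mΩ)
    (hindep : CondIndepFun (MeasurableSpace.comap Z inferInstance) hmZ Tstar C μ)
    (G Gm : ℝ → (Fin d → ℝ) → ℝ)
    (hG : ∀ t : ℝ, (fun ω => G t (Z ω)) =ᵐ[μ]
      μ[Set.indicator {ω | C ω ≤ t} (fun _ => (1 : ℝ)) |
        MeasurableSpace.comap Z inferInstance])
    (hGm : ∀ (t : ℝ) (z : Fin d → ℝ),
      Tendsto (fun s => G s z) (nhdsWithin t (Set.Iio t)) (nhds (Gm t z)))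
    (τ : ℝ)
    (hGτ : ∀ᵐ ω ∂μ, G τ (Z ω) < 1)
    (f : ℝ × (Fin d → ℝ) → ℝ) (hf : Measurable f)
    (M : ℝ) (hfbdd : ∀ p, |f p| ≤ M) :
    (∫ ω, f (min (min (Tstar ω) (C ω)) τ, Z ω) *
        ((if min (Tstar ω) (C ω) ≤ τ then
            (if Tstar ω ≤ C ω then (1 : ℝ) else 0) /
              (1 - Gm (min (Tstar ω) (C ω)) (Z ω))
          else 0) +
          (if τ < min (Tstar ω) (C ω) then 1 / (1 - G τ (Z ω)) else 0)) ∂μ)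
      = ∫ ω, f (min (Tstar ω) τ, Z ω) ∂μ := by
  set κT := condDistrib Tstar Z μ
  set κC := condDistrib C Z μ
  have hjoint : μ.map (fun ω => (Z ω, Tstar ω, C ω)) = μ.map Z ⊗ₘ (κT ×ₖ κC) := by
    rw [Measure.compProd_eq_comp_prod]
    exact (condIndepFun_iff_map_prod_eq_prod_condDistrib_prod_condDistrib hT hC hZ).1 hindep
  have hcdf (t : ℝ) : ∀ᵐ ω ∂μ, G t (Z ω) = (κC (Z ω)).real (Iic t) :=
    (hG t).trans (condDistrib_ae_eq_condExp hZ hC measurableSet_Iic).symm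
  have hleft : ∀ᵐ ω ∂μ, ∀ t, Gm t (Z ω) = (κC (Z ω)).real (Iio t) := by
    filter_upwards [ae_all_iff.2 fun q : ℚ => hcdf q] with ω hω t
    exact eq_of_tendsto_nhdsLT_of_eq_on_rat (hGm t (Z ω)) (tendsto_measureReal_Iic_nhdsLT _ t) hω
  have hτ : ∀ᵐ z ∂(μ.map Z), (κC z).real (Iic τ) < 1 := by
    rw [ae_map_iff hZ.aemeasurable (measurableSet_lt (f := fun z => (κC z).real (Iic τ))
      (κC.measurable_coe measurableSet_Iic).ennreal_toReal measurable_const)]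
    filter_upwards [hGτ, hcdf τ] with ω hω hGω
    rwa [← hGω]
  calc _ = ∫ ω, f (min (min (Tstar ω) (C ω)) τ, Z ω) *
        ipcwWeight (κC (Z ω)) τ (Tstar ω) (C ω) ∂μ := by
        refine integral_congr_ae ?_
        filter_upwards [hcdf τ, hleft] with ω hGω hGmω
        simp only [ipcwWeight, hGω, hGmω]
    _ = ∫ x, f (min (min x.2.1 x.2.2) τ, x.1) * ipcwWeight (κC x.1) τ x.2.1 x.2.2
        ∂(μ.map Z ⊗ₘ (κT ×ₖ κC)) := by
        have hint := integrable_compProd_mul_ipcwWeight (κ := κT) hτ hf hfbdd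
        rw [← hjoint] at hint ⊢
        exact (integral_map (by fun_prop) hint.aestronglyMeasurable).symm
    _ = ∫ x, f (min x.2 τ, x.1) ∂(μ.map Z ⊗ₘ κT) := integral_compProd_mul_ipcwWeight hτ hf hfbdd
    _ = _ := by
        rw [compProd_map_condDistrib hT.aemeasurable]
        exact integral_map (f := fun x : (Fin d → ℝ) × ℝ => f (min x.2 τ, x.1)) (by fun_prop)
          (hf.comp (by fun_prop)).aestronglyMeasurable

/-- **IPCW unbiasedness identity.**
If `T*` and `C` are conditionally independent given `Z`, `T = min(T*, C)`,
`δ = 1{T* ≤ C}`, `G(t|z)` is the conditional cdf of `C` given `Z = z`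
(with `Gm t z` its left limit at `t`), and `1 - G(τ|Z) > 0` a.s., then for any
bounded measurable `f`, the IPCW weight
`w = 1{T ≤ τ} δ/(1 - G(T⁻|Z)) + 1{T > τ}/(1 - G(τ|Z))` satisfies
`E[f(min(T,τ), Z) w] = E[f(min(T*,τ), Z)]`. -/
theorem ipcw_unbiased
    {Ω : Type*} [mΩ : MeasurableSpace Ω] [StandardBorelSpace Ω]
    (μ : Measure Ω) [IsProbabilityMeasure μ]
    {d : ℕ} (Tstar C : Ω → ℝ) (Z : Ω → (Fin d → ℝ))
    (hT : Measurable Tstar) (hC : Measurable C) (hZ : Measurable Z)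
    (hmZ : MeasurableSpace.comap Z inferInstance ≤ mΩ)
    (hindep : CondIndepFun (MeasurableSpace.comap Z inferInstance) hmZ Tstar C μ)
    (G Gm : ℝ → (Fin d → ℝ) → ℝ)
    (hG : ∀ t : ℝ, (fun ω => G t (Z ω)) =ᵐ[μ]
      μ[Set.indicator {ω | C ω ≤ t} (fun _ => (1 : ℝ)) |
        MeasurableSpace.comap Z inferInstance])
    (hGm : ∀ (t : ℝ) (z : Fin d → ℝ),
      Tendsto (fun s => G s z) (nhdsWithin t (Set.Iio t)) (nhds (Gm t z)))
    (τ : ℝ) (hτpos : 0 < τ)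
    (hGτ : ∀ᵐ ω ∂μ, G τ (Z ω) < 1)
    (f : ℝ × (Fin d → ℝ) → ℝ) (hf : Measurable f)
    (M : ℝ) (hfbdd : ∀ p, |f p| ≤ M) :
    (∫ ω, f (min (min (Tstar ω) (C ω)) τ, Z ω) *
        ((if min (Tstar ω) (C ω) ≤ τ then
            (if Tstar ω ≤ C ω then (1 : ℝ) else 0) /
              (1 - Gm (min (Tstar ω) (C ω)) (Z ω))
          else 0) +
          (if τ < min (Tstar ω) (C ω) then 1 / (1 - G τ (Z ω)) else 0)) ∂μ)
      = ∫ ω, f (min (Tstar ω) τ, Z ω) ∂μ :=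
  ipcw_unbiased_general (mΩ := mΩ) μ Tstar C Z hT hC hZ hmZ hindep G Gm hG hGm τ hGτ f hf M hfbdd
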